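/- For every complex m×n matrix A, the largest singular value satisfies σ₁(A) ≤ 4·√(|A|_∞·‖A‖_□·m·n), where |A|_∞ = max_{i,j}|a_{ij}|. -/

import Mathlib

open Matrix Finset

/-- The cut-norm of a complex `m × n` matrix. -/
noncomputable def cutNorm {m n : ℕ} (A : Matrix (Fin m) (Fin n) ℂ) : ℝ :=
  Finset.univ.sup' Finset.univ_nonempty
    (fun p : Finset (Fin m) × Finset (Fin n) =>
      ‖∑ i ∈ p.1, ∑ j ∈ p.2, A i j‖ / (m * n))

/-- `|A|_∞ = max_{i,j} |a_{ij}|`. -/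
noncomputable def supAbs {m n : ℕ} (A : Matrix (Fin m) (Fin n) ℂ) : ℝ :=
  ⨆ i, ⨆ j, ‖A i j‖

/-- `f` rearranged in decreasing order. -/
noncomputable def sortDesc {N : ℕ} (f : Fin N → ℝ) : Fin N → ℝ :=
  fun i => f (Tuple.sort f i.rev)

/-- The singular values `σ₁(A) ≥ σ₂(A) ≥ ⋯` of `A` (0-indexed). -/
noncomputable def singVal {m n : ℕ} (A : Matrix (Fin m) (Fin n) ℂ) (i : ℕ) : ℝ :=
  if h : i < n then
    Real.sqrt (sortDesc (Matrix.isHermitian_conjTranspose_mul_self A).eigenvalues ⟨i, h⟩)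
  else 0

/-!
Let `μ = σ₁(A)²` be the top eigenvalue of `AᴴA`, with eigenvector `v`, and let `j₀` maximise `|vⱼ|`.
Then `μ |v_{j₀}| = |(Aᴴ (A v))_{j₀}| ≤ |A|_∞ ‖A v‖₁`, and `‖A v‖₁ = ∑ᵢ xᵢ (A v)ᵢ` for unimodular
phases `xᵢ`. Splitting complex weights of modulus `≤ 1` into real and imaginary parts, these into
positive and negative parts, and rounding weights in `[0, 1]` to `0` or `1` (which cannot decrease a
suitably rotated sum) bounds `|∑ᵢⱼ xᵢ Aᵢⱼ yⱼ|` by `16 ‖A‖_□ m n` whenever `|xᵢ|, |yⱼ| ≤ 1`.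
With `y = v / |v_{j₀}|` this gives `μ ≤ 16 |A|_∞ ‖A‖_□ m n`.
-/

section
variable {ι E : Type*} [Fintype ι] [SeminormedAddCommGroup E] {c : ι → E} {B : ℝ}

/-- A norming functional `g` for the sum makes it `∑ pᵢ g(cᵢ)`, which grows when the weights are
rounded to the indicator of `{i | 0 ≤ g(cᵢ)}`. -/
lemma norm_sum_smul_le_of_mem_Icc [NormedSpace ℝ E] (hc : ∀ t : Finset ι, ‖∑ i ∈ t, c i‖ ≤ B)
    {p : ι → ℝ} (hp : ∀ i, p i ∈ Set.Icc (0 : ℝ) 1) : ‖∑ i, p i • c i‖ ≤ B := by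
  obtain ⟨g, hg, hgz⟩ := exists_dual_vector'' ℝ (∑ i, p i • c i)
  set t := univ.filter fun i => 0 ≤ g (c i)
  calc ‖∑ i, p i • c i‖ = ∑ i, p i * g (c i) := by
        have hgz' : g (∑ i, p i • c i) = ‖∑ i, p i • c i‖ := hgz
        simp [← hgz', map_sum]
    _ ≤ ∑ i, if 0 ≤ g (c i) then g (c i) else 0 := by
        gcongr with i
        obtain ⟨hp0, hp1⟩ := hp i
        split_ifs with h
        · exact mul_le_of_le_one_left h hp1
        · exact mul_nonpos_of_nonneg_of_nonpos hp0 (le_of_not_ge h)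
    _ = g (∑ i ∈ t, c i) := by rw [← sum_filter, map_sum]
    _ ≤ ‖∑ i ∈ t, c i‖ := by
        simpa using (le_abs_self _).trans (g.le_of_opNorm_le hg (∑ i ∈ t, c i))
    _ ≤ B := hc t

lemma norm_sum_smul_le_of_abs_le_one [NormedSpace ℝ E] (hc : ∀ t : Finset ι, ‖∑ i ∈ t, c i‖ ≤ B)
    {w : ι → ℝ} (hw : ∀ i, |w i| ≤ 1) : ‖∑ i, w i • c i‖ ≤ 2 * B := by
  have hpos := norm_sum_smul_le_of_mem_Icc hc (p := fun i => max (w i) 0)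
    fun i => ⟨le_max_right _ _, max_le ((le_abs_self _).trans (hw i)) zero_le_one⟩
  have hneg := norm_sum_smul_le_of_mem_Icc hc (p := fun i => max (-w i) 0)
    fun i => ⟨le_max_right _ _, max_le ((neg_le_abs _).trans (hw i)) zero_le_one⟩
  have hsplit : ∑ i, w i • c i = ∑ i, max (w i) 0 • c i - ∑ i, max (-w i) 0 • c i := by
    simp only [← sum_sub_distrib, ← sub_smul, max_zero_sub_max_neg_zero_eq_self]
  rw [hsplit]
  linarith [norm_sub_le (∑ i, max (w i) 0 • c i) (∑ i, max (-w i) 0 • c i)]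

lemma norm_sum_smul_le_of_norm_le_one [NormedSpace ℂ E] (hc : ∀ t : Finset ι, ‖∑ i ∈ t, c i‖ ≤ B)
    {x : ι → ℂ} (hx : ∀ i, ‖x i‖ ≤ 1) : ‖∑ i, x i • c i‖ ≤ 4 * B := by
  have hre := norm_sum_smul_le_of_abs_le_one hc (w := fun i => (x i).re)
    fun i => (Complex.abs_re_le_norm _).trans (hx i)
  have him := norm_sum_smul_le_of_abs_le_one hc (w := fun i => (x i).im)
    fun i => (Complex.abs_im_le_norm _).trans (hx i)
  have hsplit : ∑ i, x i • c i = ∑ i, (x i).re • c i + Complex.I • ∑ i, (x i).im • c i := by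
    rw [smul_sum, ← sum_add_distrib]
    refine sum_congr rfl fun i _ => ?_
    conv_lhs => rw [← Complex.re_add_im (x i)]
    rw [add_smul, mul_comm, mul_smul, Complex.coe_smul, Complex.coe_smul]
  rw [hsplit]
  calc _ ≤ ‖∑ i, (x i).re • c i‖ + ‖Complex.I • ∑ i, (x i).im • c i‖ := norm_add_le _ _
    _ ≤ 4 * B := by rw [norm_smul, Complex.norm_I, one_mul]; linarith

lemma sum_norm_le_of_norm_sum_le {c : ι → ℂ} (hc : ∀ t : Finset ι, ‖∑ i ∈ t, c i‖ ≤ B) :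
    ∑ i, ‖c i‖ ≤ 4 * B := by
  have hphase : ∀ i, starRingEnd ℂ (c i) / ‖c i‖ * c i = ‖c i‖ := fun i => by
    rw [div_mul_eq_mul_div, Complex.conj_mul', ← Complex.ofReal_pow, ← Complex.ofReal_div, sq,
      mul_self_div_self]
  have := norm_sum_smul_le_of_norm_le_one hc (x := fun i => starRingEnd ℂ (c i) / ‖c i‖)
    fun i => by
      rw [norm_div, Complex.norm_conj, Complex.norm_real, Real.norm_of_nonneg (norm_nonneg _)]
      exact div_self_le_one _
  simp_rw [smul_eq_mul, hphase, ← Complex.ofReal_sum, Complex.norm_real,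
    Real.norm_of_nonneg (sum_nonneg fun i _ => norm_nonneg (c i))] at this
  exact this

end

section
variable {ι κ : Type*} [Fintype ι] {A : Matrix ι κ ℂ}

lemma sum_norm_mulVec_le [Fintype κ] {B : ℝ}
    (hA : ∀ (S : Finset ι) (T : Finset κ), ‖∑ i ∈ S, ∑ j ∈ T, A i j‖ ≤ B)
    {y : κ → ℂ} (hy : ∀ j, ‖y j‖ ≤ 1) : ∑ i, ‖(A *ᵥ y) i‖ ≤ 16 * B := by
  have hrows : ∀ S : Finset ι, ‖∑ i ∈ S, (A *ᵥ y) i‖ ≤ 4 * B := fun S => by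
    have hswap : ∑ i ∈ S, (A *ᵥ y) i = ∑ j, y j • ∑ i ∈ S, A i j := by
      simp only [mulVec, dotProduct, smul_eq_mul, mul_sum]
      rw [sum_comm]
      exact sum_congr rfl fun j _ => sum_congr rfl fun i _ => mul_comm _ _
    rw [hswap]
    exact norm_sum_smul_le_of_norm_le_one (fun T => by rw [sum_comm]; exact hA S T) hy
  linarith [sum_norm_le_of_norm_sum_le hrows]

lemma norm_conjTranspose_mulVec_apply_le {α : ℝ} (hα : ∀ i j, ‖A i j‖ ≤ α) (u : ι → ℂ) (j : κ) :
    ‖(Aᴴ *ᵥ u) j‖ ≤ α * ∑ i, ‖u i‖ := by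
  calc ‖(Aᴴ *ᵥ u) j‖ ≤ ∑ i, ‖star (A i j) * u i‖ := by
        simpa [mulVec, dotProduct, conjTranspose_apply] using
          norm_sum_le univ fun i => star (A i j) * u i
    _ ≤ ∑ i, α * ‖u i‖ := by
        gcongr with i
        rw [norm_mul, norm_star]
        exact mul_le_mul_of_nonneg_right (hα i j) (norm_nonneg _)
    _ = α * ∑ i, ‖u i‖ := (mul_sum _ _ _).symm

lemma le_of_conjTranspose_mul_self_mulVec_eq [Fintype κ] {α B μ : ℝ} (hα0 : 0 ≤ α)
    (hα : ∀ i j, ‖A i j‖ ≤ α)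
    (hA : ∀ (S : Finset ι) (T : Finset κ), ‖∑ i ∈ S, ∑ j ∈ T, A i j‖ ≤ B)
    {v : κ → ℂ} (hv : v ≠ 0) (hμ : (Aᴴ * A) *ᵥ v = μ • v) : μ ≤ 16 * α * B := by
  obtain ⟨j, hj⟩ := Function.ne_iff.mp hv
  obtain ⟨j₀, -, hj₀⟩ := exists_max_image univ (fun j => ‖v j‖) ⟨j, mem_univ j⟩
  set r := ‖v j₀‖
  have hr : 0 < r := (norm_pos_iff.mpr hj).trans_le (hj₀ j (mem_univ j))
  have hAv : ∑ i, ‖(A *ᵥ v) i‖ ≤ 16 * B * r := by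
    have := sum_norm_mulVec_le hA (y := (r⁻¹ : ℂ) • v) fun j => by
      rw [Pi.smul_apply, norm_smul, norm_inv, Complex.norm_real, Real.norm_of_nonneg hr.le]
      exact inv_mul_le_one_of_le₀ (hj₀ j (mem_univ j)) hr.le
    rw [mulVec_smul] at this
    simp only [Pi.smul_apply, norm_smul, norm_inv, Complex.norm_real, Real.norm_of_nonneg hr.le,
      ← mul_sum] at this
    rwa [inv_mul_le_iff₀ hr, mul_comm r] at this
  have hμr : |μ| * r ≤ 16 * α * B * r :=
    calc |μ| * r = ‖((Aᴴ * A) *ᵥ v) j₀‖ := by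
          rw [hμ, Pi.smul_apply, norm_smul, Real.norm_eq_abs]
      _ ≤ α * ∑ i, ‖(A *ᵥ v) i‖ := by
          rw [← mulVec_mulVec]
          exact norm_conjTranspose_mulVec_apply_le hα _ _
      _ ≤ 16 * α * B * r := by nlinarith
  exact (le_abs_self μ).trans (le_of_mul_le_mul_right hμr hr)

end

lemma norm_le_supAbs {m n : ℕ} (A : Matrix (Fin m) (Fin n) ℂ) (i : Fin m) (j : Fin n) :
    ‖A i j‖ ≤ supAbs A :=
  (le_ciSup (Finite.bddAbove_range fun j => ‖A i j‖) j).trans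
    (le_ciSup (Finite.bddAbove_range fun i => ⨆ j, ‖A i j‖) i)

lemma supAbs_nonneg {m n : ℕ} (A : Matrix (Fin m) (Fin n) ℂ) : 0 ≤ supAbs A :=
  Real.iSup_nonneg fun _ => Real.iSup_nonneg fun _ => norm_nonneg _

lemma norm_sum_le_cutNorm {m n : ℕ} (A : Matrix (Fin m) (Fin n) ℂ)
    (S : Finset (Fin m)) (T : Finset (Fin n)) :
    ‖∑ i ∈ S, ∑ j ∈ T, A i j‖ ≤ cutNorm A * m * n := by
  rcases Nat.eq_zero_or_pos m with rfl | hm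
  · simp [Finset.eq_empty_of_isEmpty S]
  rcases Nat.eq_zero_or_pos n with rfl | hn
  · simp [Finset.eq_empty_of_isEmpty T]
  have h := le_sup' (fun p : Finset (Fin m) × Finset (Fin n) =>
      ‖∑ i ∈ p.1, ∑ j ∈ p.2, A i j‖ / (m * n)) (mem_univ (S, T))
  rw [mul_assoc, ← div_le_iff₀ (by positivity)]
  exact h

/-- For every complex `m × n` matrix, `σ₁(A) ≤ 4 √(|A|_∞ ‖A‖_□ m n)`. -/
theorem singVal_one_le_cutNorm_complex {m n : ℕ} (A : Matrix (Fin m) (Fin n) ℂ) :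
    singVal A 0 ≤ 4 * Real.sqrt (supAbs A * cutNorm A * m * n) := by
  unfold singVal
  split_ifs with hn
  · set hM := isHermitian_conjTranspose_mul_self A
    have heig := le_of_conjTranspose_mul_self_mulVec_eq (supAbs_nonneg A) (norm_le_supAbs A)
      (norm_sum_le_cutNorm A)
      (fun h => hM.eigenvectorBasis.orthonormal.ne_zero _ (WithLp.ofLp_injective 2 h))
      (hM.mulVec_eigenvectorBasis (Tuple.sort hM.eigenvalues (Fin.rev ⟨0, hn⟩)))
    calc Real.sqrt (sortDesc hM.eigenvalues ⟨0, hn⟩)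
        ≤ Real.sqrt (4 ^ 2 * (supAbs A * cutNorm A * m * n)) :=
          Real.sqrt_le_sqrt (by unfold sortDesc; linarith)
      _ = 4 * Real.sqrt (supAbs A * cutNorm A * m * n) := by
          rw [Real.sqrt_mul (by positivity), Real.sqrt_sq (by positivity)]
  · positivity
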